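/- (de Silva's weak witness theorem, edge case in dimension 1) Let L ⊂ R be a finite set of at least two points and p, q ∈ L distinct. If each of the simplices {p}, {q}, and {p,q} has a weak witness in R, then {p,q} has a strong witness in R. -/

import Mathlib

def IsWeakWitness (L σ : Finset ℝ) (x : ℝ) : Prop :=
  ∀ a ∈ σ, ∀ b ∈ L, b ∉ σ → |x - a| ≤ |x - b|

def IsStrongWitness (L σ : Finset ℝ) (x : ℝ) : Prop :=
  IsWeakWitness L σ x ∧ ∀ a ∈ σ, ∀ b ∈ σ, |x - a| = |x - b|

/-!
A weak witness `x` of `{p, q}` is at least as far from every other landmark `b` as from `p`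
and from `q`. On the line, a point strictly between `p` and `q` is strictly closer to `x` than
one of `p`, `q`, so no other landmark lies strictly between them; hence the midpoint of `p` and
`q`, which is equidistant from both, is no farther from them than from any other landmark.
-/

theorem isWeakWitness_pair_iff {L : Finset ℝ} {p q x : ℝ} :
    IsWeakWitness L {p, q} x ↔
      ∀ b ∈ L, b ∉ ({p, q} : Finset ℝ) → |x - p| ≤ |x - b| ∧ |x - q| ≤ |x - b| := by
  simp only [IsWeakWitness, Finset.mem_insert, Finset.mem_singleton, forall_eq_or_imp, forall_eq]
  exact ⟨fun h b hb hbn => ⟨h.1 b hb hbn, h.2 b hb hbn⟩,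
    fun h => ⟨fun b hb hbn => (h b hb hbn).1, fun b hb hbn => (h b hb hbn).2⟩⟩

theorem isStrongWitness_pair_iff {L : Finset ℝ} {p q x : ℝ} :
    IsStrongWitness L {p, q} x ↔ IsWeakWitness L {p, q} x ∧ |x - p| = |x - q| := by
  simp only [IsStrongWitness, Finset.mem_insert, Finset.mem_singleton, forall_eq_or_imp, forall_eq]
  constructor
  · rintro ⟨hw, ⟨-, hpq⟩, -⟩
    exact ⟨hw, hpq⟩
  · rintro ⟨hw, hpq⟩
    exact ⟨hw, ⟨trivial, hpq⟩, hpq.symm, trivial⟩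

theorem abs_sub_lt_max_of_mem_uIoo {p q b : ℝ} (hb : b ∈ Set.uIoo p q) (x : ℝ) :
    |x - b| < max |x - p| |x - q| := by
  obtain ⟨hmin, hmax⟩ := hb
  rw [lt_max_iff, abs_lt, abs_lt]
  rcases le_total p q with hpq | hqp
  · rw [min_eq_left hpq] at hmin
    rw [max_eq_right hpq] at hmax
    rcases le_total x b with hxb | hbx
    · right; constructor <;> cases abs_cases (x - q) <;> linarith
    · left; constructor <;> cases abs_cases (x - p) <;> linarith
  · rw [min_eq_right hqp] at hmin
    rw [max_eq_left hqp] at hmax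
    rcases le_total x b with hxb | hbx
    · left; constructor <;> cases abs_cases (x - p) <;> linarith
    · right; constructor <;> cases abs_cases (x - q) <;> linarith

theorem abs_midpoint_sub_left_eq (p q : ℝ) : |(p + q) / 2 - p| = |(p + q) / 2 - q| := by
  rw [← abs_neg]
  ring_nf

theorem abs_midpoint_sub_left_le_of_notMem_uIoo {p q b : ℝ} (hb : b ∉ Set.uIoo p q) :
    |(p + q) / 2 - p| ≤ |(p + q) / 2 - b| := by
  simp only [Set.uIoo, Set.mem_Ioo, not_and_or, not_lt] at hb
  rcases le_total p q with hpq | hqp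
  · rw [min_eq_left hpq, max_eq_right hpq] at hb
    rcases hb with hb | hb <;> cases abs_cases ((p + q) / 2 - p) <;>
      cases abs_cases ((p + q) / 2 - b) <;> linarith
  · rw [min_eq_right hqp, max_eq_left hqp] at hb
    rcases hb with hb | hb <;> cases abs_cases ((p + q) / 2 - p) <;>
      cases abs_cases ((p + q) / 2 - b) <;> linarith

theorem weak_witness_edge_dim1_general (L : Finset ℝ)
    (p q : ℝ)
    (hwpq : ∃ x : ℝ, IsWeakWitness L {p, q} x) :
    ∃ x : ℝ, IsStrongWitness L {p, q} x := by
  obtain ⟨x, hx⟩ := hwpq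
  refine ⟨(p + q) / 2, isStrongWitness_pair_iff.2 ⟨isWeakWitness_pair_iff.2 fun b hb hbn => ?_,
    abs_midpoint_sub_left_eq p q⟩⟩
  have hb_outside : b ∉ Set.uIoo p q := fun hb' =>
    (abs_sub_lt_max_of_mem_uIoo hb' x).not_ge (max_le_iff.2 (isWeakWitness_pair_iff.1 hx b hb hbn))
  have h := abs_midpoint_sub_left_le_of_notMem_uIoo hb_outside
  exact ⟨h, abs_midpoint_sub_left_eq p q ▸ h⟩

/-- de Silva's weak witness theorem, edge case in dimension 1. -/
theorem weak_witness_edge_dim1 (L : Finset ℝ) (hL : 2 ≤ L.card)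
    (p q : ℝ) (hp : p ∈ L) (hq : q ∈ L) (hpq : p ≠ q)
    (hwp : ∃ x : ℝ, IsWeakWitness L {p} x)
    (hwq : ∃ x : ℝ, IsWeakWitness L {q} x)
    (hwpq : ∃ x : ℝ, IsWeakWitness L {p, q} x) :
    ∃ x : ℝ, IsStrongWitness L {p, q} x :=
  weak_witness_edge_dim1_general L p q hwpq
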